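/- An atomic r-arrow T• : 0 → n of the homotopy coherent n-simplex 𝔠Δⁿ fails to lie in the subcomputad 𝔠[∂Δⁿ] if and only if T^r = [0,n]; such 'bead shapes' that are moreover non-degenerate are in bijection with ordered partitions (I₁,…,I_r) of {1,…,n−1} into nonempty subsets, via T^i = {0,n} ∪ I₁ ∪ ⋯ ∪ I_i. -/

import Mathlib

/-!
Bead shapes.  An `r`-arrow from `0` to `n` of the homotopy coherent `n`-simplex
`𝔠Δⁿ` is a monotone chain `T : Fin (r+1) → Finset (Fin (n+1))` with each `T s`
containing `0` and `n`.  It is atomic iff `T 0 = {0, n}`, and non-degenerate iff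
the chain is strictly increasing.  We formalize:
(1) an atomic `r`-arrow `0 → n` fails to lie in the boundary subcomputad
`𝔠[∂Δⁿ]` iff `T r = [0,n]`; and
(2) the non-degenerate atomic arrows with `T r = [0,n]` (the bead shapes) are in
bijection with ordered partitions `(I₁,…,I_r)` of the interior `{1,…,n−1}` into
nonempty subsets, via `I_s = T s ∖ T (s−1)`, i.e. `T s = {0,n} ∪ I₁ ∪ ⋯ ∪ I_s`.
-/

/-- An `r`-arrow from `0` to `n` in the homotopy coherent `n`-simplex. -/
def IsCoherentArrow₀ (n r : ℕ) (T : Fin (r + 1) → Finset (Fin (n + 1))) : Prop :=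
  Monotone T ∧ ∀ s, (0 : Fin (n + 1)) ∈ T s ∧ Fin.last n ∈ T s

/-- Membership of an arrow `0 → n` of `𝔠Δⁿ` in the boundary subcomputad
`𝔠[∂Δⁿ]`: supported in a proper face or factoring through an intermediate
vertex. -/
def InBoundarySubcomputad₀ (n r : ℕ)
    (T : Fin (r + 1) → Finset (Fin (n + 1))) : Prop :=
  (∃ v : Fin (n + 1), ∀ s, v ∉ T s) ∨
    (∃ v : Fin (n + 1), 0 < v ∧ v < Fin.last n ∧ v ∈ T 0)

/-- The type of `r`-dimensional bead shapes `0 → n`: non-degenerate atomic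
`r`-arrows of `𝔠Δⁿ` from `0` to `n` not lying in `𝔠[∂Δⁿ]`, i.e. with
`T r = [0,n]`. -/
def BeadShape (n r : ℕ) : Type :=
  { T : Fin (r + 1) → Finset (Fin (n + 1)) //
      IsCoherentArrow₀ n r T ∧
      T 0 = {0, Fin.last n} ∧
      (∀ s : Fin r, T s.castSucc ≠ T s.succ) ∧
      T (Fin.last r) = Finset.univ }

/-- Ordered partitions of the interior `{1,…,n−1}` of `[0,n]` into `r` nonempty
subsets. -/
def InteriorPartition (n r : ℕ) : Type :=
  { I : Fin r → Finset (Fin (n + 1)) //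
      (∀ s, (I s).Nonempty) ∧
      (∀ s t, s ≠ t → Disjoint (I s) (I t)) ∧
      Finset.univ.biUnion I = Finset.univ \ {0, Fin.last n} }

namespace BeadAux

variable {n r : ℕ}

/-- minimal-index step lemma -/
lemma exists_step {T : Fin (r + 1) → Finset (Fin (n + 1))} (hmono : Monotone T)
    {x : Fin (n + 1)} {s : Fin (r + 1)} (h0 : x ∉ T 0) (hs : x ∈ T s) :
    ∃ t : Fin r, (t : ℕ) < (s : ℕ) ∧ x ∉ T t.castSucc ∧ x ∈ T t.succ := by
  classical
  have hex : ∃ k, ∃ h : k < r + 1, x ∈ T ⟨k, h⟩ := ⟨s, s.isLt, by simpa using hs⟩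
  obtain ⟨hk, hxk⟩ := Nat.find_spec hex
  have hkle : Nat.find hex ≤ (s : ℕ) := Nat.find_le ⟨s.isLt, by simpa using hs⟩
  have hk0 : Nat.find hex ≠ 0 := by
    intro h
    apply h0
    have he : (⟨Nat.find hex, hk⟩ : Fin (r + 1)) = 0 := by
      exact Fin.ext (by rw [Fin.val_zero]; convert h)
    exact he ▸ hxk
  obtain ⟨m, hm⟩ := Nat.exists_eq_succ_of_ne_zero hk0
  have hmr : m < r := by omega
  refine ⟨⟨m, hmr⟩, by simpa using (by omega : m < (s : ℕ)), ?_, ?_⟩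
  · intro hmem
    have := Nat.find_min hex (m := m) (by omega)
    exact this ⟨by omega, by simpa [Fin.castSucc, Fin.ext_iff] using hmem⟩
  · have he : (Fin.succ ⟨m, hmr⟩ : Fin (r + 1)) = ⟨Nat.find hex, hk⟩ := by
      exact Fin.ext (by simp only [Fin.val_succ]; convert hm.symm)
    rw [he]; exact hxk

lemma mem_T0 {T : Fin (r + 1) → Finset (Fin (n + 1))} (h0 : T 0 = {0, Fin.last n})
    {x : Fin (n + 1)} : x ∈ T 0 ↔ x = 0 ∨ x = Fin.last n := by
  rw [h0]; simp

/-- forward map data -/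
def toPartFun (T : Fin (r + 1) → Finset (Fin (n + 1))) (s : Fin r) : Finset (Fin (n + 1)) :=
  T s.succ \ T s.castSucc

lemma castSucc_le_succ (s : Fin r) : (s.castSucc : Fin (r + 1)) ≤ s.succ := by
  simp [Fin.le_def]

lemma toPart_props (T : BeadShape n r) :
    (∀ s, (toPartFun T.val s).Nonempty) ∧
    (∀ s t, s ≠ t → Disjoint (toPartFun T.val s) (toPartFun T.val t)) ∧
    Finset.univ.biUnion (toPartFun T.val) = Finset.univ \ {0, Fin.last n} := by
  obtain ⟨T, ⟨hmono, hmem⟩, h0, hne, hlast⟩ := T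
  have hdisj : ∀ s t : Fin r, s < t → Disjoint (toPartFun T s) (toPartFun T t) := by
    intro s t hst
    rw [Finset.disjoint_left]
    intro x hx hx'
    have h1 : x ∈ T s.succ := (Finset.mem_sdiff.mp hx).1
    have h2 : x ∉ T t.castSucc := (Finset.mem_sdiff.mp hx').2
    exact h2 (hmono (by simp [Fin.le_def]; omega) h1)
  refine ⟨?_, ?_, ?_⟩
  · intro s
    rw [toPartFun, Finset.sdiff_nonempty]
    intro hsub
    exact hne s (le_antisymm (hmono (castSucc_le_succ s)) hsub)
  · intro s t hst
    rcases lt_or_gt_of_ne hst with h | h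
    · exact hdisj s t h
    · exact (hdisj t s h).symm
  · ext x
    rw [Finset.mem_biUnion]
    constructor
    · rintro ⟨s, -, hx⟩
      obtain ⟨h1, h2⟩ := Finset.mem_sdiff.mp hx
      refine Finset.mem_sdiff.mpr ⟨Finset.mem_univ x, ?_⟩
      rw [← h0]
      exact fun h => h2 (hmono (Fin.zero_le _) h)
    · intro hx
      have hx0 : x ∉ T 0 := by rw [h0]; exact (Finset.mem_sdiff.mp hx).2
      have hxl : x ∈ T (Fin.last r) := by rw [hlast]; exact Finset.mem_univ x
      obtain ⟨t, -, h1, h2⟩ := exists_step hmono hx0 hxl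
      exact ⟨t, Finset.mem_univ t, Finset.mem_sdiff.mpr ⟨h2, h1⟩⟩

def toPart (T : BeadShape n r) : InteriorPartition n r :=
  ⟨toPartFun T.val, toPart_props T⟩

/-- inverse map data -/
def toBeadFun (I : Fin r → Finset (Fin (n + 1))) (s : Fin (r + 1)) : Finset (Fin (n + 1)) :=
  {0, Fin.last n} ∪ (Finset.univ.filter (fun t : Fin r => (t : ℕ) < (s : ℕ))).biUnion I

lemma mem_toBeadFun {I : Fin r → Finset (Fin (n + 1))} {s : Fin (r + 1)} {x : Fin (n + 1)} :
    x ∈ toBeadFun I s ↔ (x = 0 ∨ x = Fin.last n) ∨ ∃ t : Fin r, (t : ℕ) < (s : ℕ) ∧ x ∈ I t := by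
  simp only [toBeadFun, Finset.mem_union, Finset.mem_insert, Finset.mem_singleton,
    Finset.mem_biUnion, Finset.mem_filter, Finset.mem_univ, true_and]

lemma toBead_props (I : InteriorPartition n r) :
    IsCoherentArrow₀ n r (toBeadFun I.val) ∧
    toBeadFun I.val 0 = {0, Fin.last n} ∧
    (∀ s : Fin r, toBeadFun I.val s.castSucc ≠ toBeadFun I.val s.succ) ∧
    toBeadFun I.val (Fin.last r) = Finset.univ := by
  obtain ⟨I, hne, hdisj, huni⟩ := I
  have hsub : ∀ t, I t ⊆ Finset.univ \ {0, Fin.last n} := by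
    intro t
    rw [← huni]
    intro x hx
    exact Finset.mem_biUnion.mpr ⟨t, Finset.mem_univ t, hx⟩
  refine ⟨⟨?_, ?_⟩, ?_, ?_, ?_⟩
  · intro a b hab
    intro x hx
    rw [mem_toBeadFun] at hx ⊢
    rcases hx with h | ⟨t, ht, hxt⟩
    · exact Or.inl h
    · exact Or.inr ⟨t, lt_of_lt_of_le ht hab, hxt⟩
  · intro s
    constructor <;> (rw [mem_toBeadFun]; simp)
  · ext x
    rw [mem_toBeadFun]
    simp
  · intro s h
    obtain ⟨x, hx⟩ := hne s
    have hx0 : x ∈ Finset.univ \ {0, Fin.last n} := hsub s hx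
    simp only [Finset.mem_sdiff, Finset.mem_insert, Finset.mem_singleton] at hx0
    have hxs : x ∈ toBeadFun I s.succ := by
      rw [mem_toBeadFun]
      exact Or.inr ⟨s, by simp, hx⟩
    rw [← h, mem_toBeadFun] at hxs
    rcases hxs with h' | ⟨t, ht, hxt⟩
    · tauto
    · have : t ≠ s := by
        intro he; subst he
        simp at ht
      exact (Finset.disjoint_left.mp (hdisj t s this)) hxt hx
  · apply Finset.eq_univ_iff_forall.mpr
    intro x
    rw [mem_toBeadFun]
    by_cases hx : x = 0 ∨ x = Fin.last n
    · exact Or.inl hx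
    · have : x ∈ Finset.univ.biUnion I := by
        rw [huni]
        refine Finset.mem_sdiff.mpr ⟨Finset.mem_univ x, ?_⟩
        simp only [Finset.mem_insert, Finset.mem_singleton]
        exact hx
      obtain ⟨t, -, hxt⟩ := Finset.mem_biUnion.mp this
      exact Or.inr ⟨t, by simpa using t.isLt, hxt⟩

def toBead (I : InteriorPartition n r) : BeadShape n r :=
  ⟨toBeadFun I.val, toBead_props I⟩

lemma left_inv (T : BeadShape n r) : toBead (toPart T) = T := by
  obtain ⟨T, ⟨hmono, hmem⟩, h0, hne, hlast⟩ := T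
  apply Subtype.ext
  funext s
  ext x
  show x ∈ toBeadFun (toPartFun T) s ↔ x ∈ T s
  rw [mem_toBeadFun]
  constructor
  · rintro (h | ⟨t, ht, hxt⟩)
    · have : x ∈ T 0 := (mem_T0 h0).mpr h
      exact hmono (Fin.zero_le s) this
    · have h1 : x ∈ T t.succ := (Finset.mem_sdiff.mp hxt).1
      exact hmono (by simp [Fin.le_def]; omega) h1
  · intro hx
    by_cases hx0 : x ∈ T 0
    · exact Or.inl ((mem_T0 h0).mp hx0)
    · obtain ⟨t, ht, h1, h2⟩ := exists_step hmono hx0 hx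
      exact Or.inr ⟨t, ht, Finset.mem_sdiff.mpr ⟨h2, h1⟩⟩

lemma right_inv (I : InteriorPartition n r) : toPart (toBead I) = I := by
  obtain ⟨I, hne, hdisj, huni⟩ := I
  have hsub : ∀ t, I t ⊆ Finset.univ \ {0, Fin.last n} := by
    intro t
    rw [← huni]
    intro x hx
    exact Finset.mem_biUnion.mpr ⟨t, Finset.mem_univ t, hx⟩
  apply Subtype.ext
  funext s
  ext x
  show x ∈ toBeadFun I s.succ \ toBeadFun I s.castSucc ↔ x ∈ I s
  rw [Finset.mem_sdiff, mem_toBeadFun, mem_toBeadFun]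
  simp only [Fin.val_succ, Fin.coe_castSucc]
  constructor
  · rintro ⟨h1 | ⟨t, ht, hxt⟩, h2⟩
    · exact absurd (Or.inl h1) h2
    · have hts : (t : ℕ) = (s : ℕ) := by
        by_contra h
        exact h2 (Or.inr ⟨t, by omega, hxt⟩)
      have : t = s := Fin.ext hts
      subst this; exact hxt
  · intro hx
    have hx0 : x ∈ Finset.univ \ {0, Fin.last n} := hsub s hx
    simp only [Finset.mem_sdiff, Finset.mem_insert, Finset.mem_singleton] at hx0
    refine ⟨Or.inr ⟨s, by omega, hx⟩, ?_⟩
    rintro (h | ⟨t, ht, hxt⟩)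
    · tauto
    · have : t ≠ s := by intro he; subst he; omega
      exact (Finset.disjoint_left.mp (hdisj t s this)) hxt hx

end BeadAux

theorem bead_shapes (n r : ℕ) :
    -- (1) an atomic `r`-arrow `0 → n` is not in `𝔠[∂Δⁿ]` iff `T r = [0,n]`:
    (∀ T : Fin (r + 1) → Finset (Fin (n + 1)),
      IsCoherentArrow₀ n r T → T 0 = {0, Fin.last n} →
      (¬ InBoundarySubcomputad₀ n r T ↔ T (Fin.last r) = Finset.univ))
    -- (2) bead shapes biject with ordered partitions of the interior:
    ∧ ∃ e : BeadShape n r ≃ InteriorPartition n r,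
        ∀ (T : BeadShape n r) (s : Fin r),
          (e T).val s = T.val s.succ \ T.val s.castSucc := by
  constructor
  · intro T ⟨hmono, hmem⟩ h0
    constructor
    · intro hnb
      apply Finset.eq_univ_iff_forall.mpr
      intro v
      by_contra hv
      apply hnb
      left
      exact ⟨v, fun s hs => hv (hmono (Fin.le_last s) hs)⟩
    · intro hlast hb
      rcases hb with ⟨v, hv⟩ | ⟨v, h1, h2, h3⟩
      · exact hv (Fin.last r) (by rw [hlast]; exact Finset.mem_univ v)
      · rw [h0] at h3
        simp only [Finset.mem_insert, Finset.mem_singleton] at h3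
        rcases h3 with h | h
        · subst h; exact lt_irrefl _ h1
        · subst h; exact lt_irrefl _ h2
  · refine ⟨⟨BeadAux.toPart, BeadAux.toBead, BeadAux.left_inv, BeadAux.right_inv⟩, ?_⟩
    intro T s
    rfl
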